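/- arXiv:1712.07751 — 3 statements merged into one kernel-verified Lean document; each statement's English description precedes it below -/
import Mathlib

section
/- Let K be a field, q ∈ K, and A a q-generalized flexible algebra over K. Then the q-generalized Jacobi identity holds: for all x, y, z ∈ A, [x·y − q·(y·x), z] + [y·z − q·(z·y), x] + [z·x − q·(x·z), y] = 0, where [a,b] := a·b − b·a. -/
/-- The commutator `[x,y] = x·y − y·x` of a bilinear multiplication. -/
def lieBr {K A : Type*} [Field K] [AddCommGroup A] [Module K A]
    (mul : A →ₗ[K] A →ₗ[K] A) (x y : A) : A :=
  mul x y - mul y x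

/-- In a `q`-generalized flexible algebra `A` over a field `K`, the
`q`-generalized Jacobi identity holds:
`[x·y − q·(y·x), z] + [y·z − q·(z·y), x] + [z·x − q·(x·z), y] = 0`. -/
theorem stmt7 {K A : Type*} [Field K] [AddCommGroup A] [Module K A]
    (q : K) (mul : A →ₗ[K] A →ₗ[K] A)
    (hflex : ∀ x y z : A,
      mul (mul x y) z - mul x (mul y z) = q • (mul (mul z y) x - mul z (mul y x))) :
    ∀ x y z : A,
      lieBr mul (mul x y - q • mul y x) z + lieBr mul (mul y z - q • mul z y) x
        + lieBr mul (mul z x - q • mul x z) y = 0 := by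
  intro x y z
  have h1 := hflex x y z
  have h2 := hflex y z x
  have h3 := hflex z x y
  simp only [lieBr, map_sub, map_smul, LinearMap.sub_apply, LinearMap.smul_apply,
    smul_sub] at *
  linear_combination (norm := module) h1 + h2 + h3
end

section
/- Let K be a field, q ∈ K, A a q-generalized flexible algebra over K, V a finite-dimensional K-vector space, and l, r : A → End_K(V) two K-linear maps. Let l*, r* : A → End_K(V*) denote the dual maps, defined by ⟨l*_x(f), u⟩ = ⟨f, l_x(u)⟩ and ⟨r*_x(f), u⟩ = ⟨f, r_x(u)⟩ for f ∈ V*, u ∈ V (i.e. l*_x and r*_x are the transposes of l_x and r_x). Then (l, r, V) is a bimodule of A if and only if (r*, l*, V*) is a bimodule of A. -/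
open Module

/-- for a `q`-generalized flexible algebra `A` over a field `K` and a
finite-dimensional vector space `V` with linear maps `l, r : A → End_K(V)`, the triple
`(l, r, V)` is a bimodule of `A` iff `(r*, l*, V*)` is a bimodule of `A`, where `l*, r*`
are the transposes. -/
theorem stmt12 {K A V : Type*} [Field K] [AddCommGroup A] [Module K A]
    [AddCommGroup V] [Module K V] [FiniteDimensional K V]
    (q : K) (mul : A →ₗ[K] A →ₗ[K] A)
    (hflex : ∀ x y z : A,
      mul (mul x y) z - mul x (mul y z) = q • (mul (mul z y) x - mul z (mul y x)))
    (l r : A →ₗ[K] Module.End K V) :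
    ((∀ x y : A, l (mul x y) - l x * l y = q • (r x * r y - r (mul y x))) ∧
     (∀ x y : A, r x * l y - l y * r x = q • (r y * l x - l x * r y)) ∧
     (∀ x y : A, r x * r y - r (mul y x) = q • (l (mul x y) - l x * l y)))
    ↔
    ((∀ x y : A,
        (r (mul x y)).dualMap - (r x).dualMap ∘ₗ (r y).dualMap
          = q • ((l x).dualMap ∘ₗ (l y).dualMap - (l (mul y x)).dualMap)) ∧
     (∀ x y : A,
        (l x).dualMap ∘ₗ (r y).dualMap - (r y).dualMap ∘ₗ (l x).dualMap
          = q • ((l y).dualMap ∘ₗ (r x).dualMap - (r x).dualMap ∘ₗ (l y).dualMap)) ∧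
     (∀ x y : A,
        (l x).dualMap ∘ₗ (l y).dualMap - (l (mul y x)).dualMap
          = q • ((r (mul x y)).dualMap - (r x).dualMap ∘ₗ (r y).dualMap))) := by
  have hinj : ∀ f g : Module.End K V, f.dualMap = g.dualMap → f = g := by
    intro f g h
    ext u
    rw [← sub_eq_zero]
    refine (Module.forall_dual_apply_eq_zero_iff K _).mp fun φ => ?_
    have h' := congrFun (congrArg DFunLike.coe h) φ
    have h'' := congrFun (congrArg DFunLike.coe h') u
    simpa [sub_eq_zero] using h''
  have hdsub : ∀ f g : Module.End K V, (f - g).dualMap = f.dualMap - g.dualMap := by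
    intro f g; ext φ u; simp
  have hdsmul : ∀ f : Module.End K V, (q • f).dualMap = q • f.dualMap := by
    intro f; ext φ u; simp
  have hdmul : ∀ f g : Module.End K V, (f * g).dualMap = g.dualMap ∘ₗ f.dualMap := by
    intro f g; ext φ u; simp [Module.End.mul_apply]
  have key : ∀ a b c d : Module.End K V, (a - b = q • (c - d)) ↔
      (b.dualMap - a.dualMap = q • (d.dualMap - c.dualMap)) := by
    intro a b c d
    constructor
    · intro h
      have h' : (a - b).dualMap = (q • (c - d)).dualMap := by rw [h]
      rw [hdsub, hdsmul, hdsub] at h'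
      rw [← neg_sub a.dualMap b.dualMap, h']; module
    · intro h
      apply hinj
      rw [hdsub, hdsmul, hdsub, ← neg_sub b.dualMap a.dualMap, h]; module
  have key2 : ∀ a b c d : Module.End K V, (a - b = q • (c - d)) ↔ (b - a = q • (d - c)) := by
    intro a b c d
    constructor <;> intro h <;> (rw [← neg_sub, h]; module)
  constructor
  · rintro ⟨h1, h2, h3⟩
    refine ⟨fun x y => ?_, fun x y => ?_, fun x y => ?_⟩
    · simp only [← hdmul]
      exact (key _ _ _ _).mp (h3 y x)
    · simp only [← hdmul]
      exact (key _ _ _ _).mp ((key2 _ _ _ _).mp (h2 y x))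
    · simp only [← hdmul]
      exact (key _ _ _ _).mp (h1 y x)
  · rintro ⟨h1, h2, h3⟩
    refine ⟨fun x y => ?_, fun x y => ?_, fun x y => ?_⟩
    · have h := h3 y x; simp only [← hdmul] at h
      exact (key _ _ _ _).mpr h
    · have h := h2 y x; simp only [← hdmul] at h
      exact (key2 _ _ _ _).mp ((key _ _ _ _).mpr h)
    · have h := h1 y x; simp only [← hdmul] at h
      exact (key _ _ _ _).mpr h
end

section
/- Let K be a field, q ∈ K, and A a finite-dimensional q-generalized flexible algebra over K. Let L, R : A → End_K(A) be the left and right multiplication maps, L_x(y) = x·y, R_x(y) = y·x, and let L*, R* : A → End_K(A*) be their dual (transpose) maps, ⟨L*_x(f), y⟩ = ⟨f, x·y⟩ and ⟨R*_x(f), y⟩ = ⟨f, y·x⟩ for f ∈ A*. Then (R*, L*, A*) is a bimodule of A. -/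
open Module

/-- for a finite-dimensional `q`-generalized flexible algebra `A` over `K`,
with `L, R` the left and right multiplication operators and `L*, R*` their transposes on
`A*`, the triple `(R*, L*, A*)` is a bimodule of `A`; i.e., with `l := R*` and `r := L*`,
the three bimodule identities hold. -/
theorem stmt13 {K A : Type*} [Field K] [AddCommGroup A] [Module K A]
    [FiniteDimensional K A]
    (q : K) (mul : A →ₗ[K] A →ₗ[K] A)
    (hflex : ∀ x y z : A,
      mul (mul x y) z - mul x (mul y z) = q • (mul (mul z y) x - mul z (mul y x))) :
    (∀ x y : A,
        (mul.flip (mul x y)).dualMap - (mul.flip x).dualMap ∘ₗ (mul.flip y).dualMap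
          = q • ((mul x).dualMap ∘ₗ (mul y).dualMap - (mul (mul y x)).dualMap)) ∧
    (∀ x y : A,
        (mul x).dualMap ∘ₗ (mul.flip y).dualMap - (mul.flip y).dualMap ∘ₗ (mul x).dualMap
          = q • ((mul y).dualMap ∘ₗ (mul.flip x).dualMap
              - (mul.flip x).dualMap ∘ₗ (mul y).dualMap)) ∧
    (∀ x y : A,
        (mul x).dualMap ∘ₗ (mul y).dualMap - (mul (mul y x)).dualMap
          = q • ((mul.flip (mul x y)).dualMap
              - (mul.flip x).dualMap ∘ₗ (mul.flip y).dualMap)) := by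
  refine ⟨?_, ?_, ?_⟩ <;> intro x y <;> ext f a <;>
    simp only [LinearMap.sub_apply, LinearMap.comp_apply, LinearMap.dualMap_apply,
      LinearMap.smul_apply, LinearMap.flip_apply, smul_eq_mul]
  · have h := congrArg f (hflex a x y)
    simp only [map_sub, map_smul, smul_eq_mul] at h
    linear_combination -h
  · have h := congrArg f (hflex x a y)
    simp only [map_sub, map_smul, smul_eq_mul] at h
    linear_combination h
  · have h := congrArg f (hflex y x a)
    simp only [map_sub, map_smul, smul_eq_mul] at h
    linear_combination -h
end
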